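/- arXiv:2005.09517 — 5 statements merged into one kernel-verified Lean document; each statement's English description precedes it below -/
import Mathlib

section
/- Consider the first-order linear difference equation x_{n+1} = a·x_n + b_n for n ≥ 1 with given initial value x_1. If |a| < 1 and b_n = b·n^γ for some real b and some γ > -1, then x_n = b_{n-1}/(1-a) - (γ·a·b_{n-1}/(n·(1-a)^2))·(1+o(1)) as n → ∞; equivalently, x_n - b·(n-1)^γ/(1-a) = -(γ·a·b·(n-1)^γ/(n·(1-a)^2))·(1+o(1)) as n → ∞. -/
/-!
Let `f n = b (n-1)^γ/(1-a) - γ a b (n-1)^γ/(n (1-a)^2)` and `w n = (n-1)^γ/n`. The error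
`y n = x n - f n` satisfies the same recursion `y (n+1) = a y n + r n`, with forcing
`r n = a f n + b n^γ - f (n+1) = o(w (n+1))`: the leading terms cancel up to
`n^γ - (n-1)^γ ~ γ n^γ/n`, which the correction term of `f` absorbs. Since `w` varies slowly
(`w n / w (n+1) → 1`) and `|a| < 1`, the normalised error `‖y n‖ / |w n|` obeys a contraction
`v (n+1) ≤ q v n + o(1)` with `q < 1`, hence tends to `0`.
-/

open Filter Asymptotics Topology

theorem sub_le_pow_mul_sub_of_le_mul_add {q c : ℝ} (hq : 0 ≤ q) {v : ℕ → ℝ} {N : ℕ}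
    (h : ∀ n ≥ N, v (n + 1) ≤ q * v n + (1 - q) * c) :
    ∀ n ≥ N, v n - c ≤ q ^ (n - N) * (v N - c) := by
  intro n hn
  induction n, hn using Nat.le_induction with
  | base => simp
  | succ n hn ih =>
    calc v (n + 1) - c ≤ q * (v n - c) := by linarith [h n hn]
      _ ≤ q * (q ^ (n - N) * (v N - c)) := mul_le_mul_of_nonneg_left ih hq
      _ = q ^ (n + 1 - N) * (v N - c) := by rw [Nat.sub_add_comm hn, pow_succ]; ring

theorem tendsto_zero_of_le_mul_add {q : ℝ} (hq0 : 0 ≤ q) (hq1 : q < 1) {v ε : ℕ → ℝ}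
    (hv : ∀ n, 0 ≤ v n) (hε : Tendsto ε atTop (𝓝 0))
    (h : ∀ᶠ n in atTop, v (n + 1) ≤ q * v n + ε n) : Tendsto v atTop (𝓝 0) := by
  refine tendsto_order.2 ⟨fun c hc => Eventually.of_forall fun n => hc.trans_le (hv n),
    fun c hc => ?_⟩
  -- `c / 2` is the fixed point of `t ↦ q t + (1 - q) c / 2`, so it attracts `v` from above
  have hεc : ∀ᶠ n in atTop, ε n < (1 - q) * (c / 2) :=
    hε.eventually_lt_const (by nlinarith)
  obtain ⟨N, hN⟩ := eventually_atTop.1 (h.and hεc)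
  have hbound := sub_le_pow_mul_sub_of_le_mul_add hq0 (c := c / 2)
    fun n hn => (hN n hn).1.trans (by linarith [(hN n hn).2])
  have hlim : Tendsto (fun n => c / 2 + q ^ (n - N) * (v N - c / 2)) atTop (𝓝 (c / 2)) := by
    simpa using tendsto_const_nhds.add (((tendsto_pow_atTop_nhds_zero_of_lt_one hq0 hq1).comp
      (tendsto_sub_atTop_nat N)).mul_const (v N - c / 2))
  filter_upwards [hlim.eventually_lt_const (half_lt_self hc), eventually_ge_atTop N] with n hn hNn
  linarith [hbound n hNn]

theorem isLittleO_of_eventually_eq_smul_add {E : Type*} [NormedAddCommGroup E]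
    [NormedSpace ℝ E] {a : ℝ} (ha : |a| < 1) {y r : ℕ → E} {w : ℕ → ℝ}
    (hrec : ∀ᶠ n in atTop, y (n + 1) = a • y n + r n) (hw : ∀ᶠ n in atTop, w n ≠ 0)
    (hratio : Tendsto (fun n => w n / w (n + 1)) atTop (𝓝 1))
    (hr : r =o[atTop] fun n => w (n + 1)) : y =o[atTop] w := by
  obtain ⟨q, haq, hq1⟩ := exists_between ha
  have hratio' : ∀ᶠ n in atTop, |a| * ‖w n / w (n + 1)‖ < q := by
    have := hratio.norm.const_mul |a|
    rw [norm_one, mul_one] at this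
    exact this.eventually_lt_const haq
  have hw' : ∀ᶠ n in atTop, w (n + 1) ≠ 0 := (tendsto_add_atTop_nat 1).eventually hw
  rw [← isLittleO_norm_norm,
    isLittleO_iff_tendsto' (hw.mono fun n hn h => absurd (norm_eq_zero.1 h) hn)]
  refine tendsto_zero_of_le_mul_add ((abs_nonneg a).trans haq.le) hq1
    (fun n => div_nonneg (norm_nonneg _) (norm_nonneg _)) hr.norm_norm.tendsto_div_nhds_zero ?_
  filter_upwards [hrec, hw, hw', hratio'] with n hy hwn hwn' hq
  have hwn₀ : 0 < ‖w n‖ := norm_pos_iff.2 hwn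
  have hwn₀' : 0 < ‖w (n + 1)‖ := norm_pos_iff.2 hwn'
  calc ‖y (n + 1)‖ / ‖w (n + 1)‖ ≤ (|a| * ‖y n‖ + ‖r n‖) / ‖w (n + 1)‖ := by
        gcongr
        rw [hy, ← Real.norm_eq_abs, ← norm_smul]
        exact norm_add_le _ _
    _ = |a| * ‖w n / w (n + 1)‖ * (‖y n‖ / ‖w n‖) + ‖r n‖ / ‖w (n + 1)‖ := by
        rw [norm_div]; field_simp
    _ ≤ q * (‖y n‖ / ‖w n‖) + ‖r n‖ / ‖w (n + 1)‖ := by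
        gcongr

theorem tendsto_natCast_mul_one_sub_one_sub_inv_rpow (γ : ℝ) :
    Tendsto (fun n : ℕ => (n : ℝ) * (1 - (1 - (n : ℝ)⁻¹) ^ γ)) atTop (𝓝 γ) := by
  have hslope := (Real.hasDerivAt_rpow_const (x := 1) (p := γ)
    (Or.inl one_ne_zero)).tendsto_slope_zero_left
  have hinv : Tendsto (fun n : ℕ => -(n : ℝ)⁻¹) atTop (𝓝[<] 0) := by
    have h : Tendsto (fun n : ℕ => (n : ℝ)⁻¹) atTop (𝓝[>] (-0)) := by
      rw [neg_zero]; exact tendsto_inv_atTop_nhdsGT_zero.comp tendsto_natCast_atTop_atTop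
    exact tendsto_neg_nhdsGT_neg.comp h
  refine (by simpa using hslope.comp hinv : Tendsto _ atTop (𝓝 γ)).congr' ?_
  filter_upwards [eventually_gt_atTop 0] with n hn
  simp only [Function.comp_apply, inv_neg, inv_inv, ← sub_eq_add_neg]
  ring

theorem tendsto_one_sub_natCast_inv_rpow (γ : ℝ) :
    Tendsto (fun n : ℕ => (1 - (n : ℝ)⁻¹) ^ γ) atTop (𝓝 1) := by
  simpa using (tendsto_const_nhds.sub tendsto_inv_atTop_nhds_zero_nat).rpow_const
    (Or.inl (by norm_num : (1 : ℝ) - 0 ≠ 0))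

theorem sub_one_rpow_eq_rpow_mul {t : ℝ} (ht : 1 ≤ t) (γ : ℝ) :
    (t - 1) ^ γ = t ^ γ * (1 - t⁻¹) ^ γ := by
  have ht0 : t ≠ 0 := by positivity
  rw [← Real.mul_rpow (by positivity) (sub_nonneg.2 (inv_le_one_of_one_le₀ ht)), mul_sub,
    mul_inv_cancel₀ ht0, mul_one]

noncomputable def errorScale (γ : ℝ) (n : ℕ) : ℝ := ((n : ℝ) - 1) ^ γ / n

theorem errorScale_succ (γ : ℝ) (n : ℕ) :
    errorScale γ (n + 1) = (n : ℝ) ^ γ / (n + 1) := by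
  simp [errorScale]

theorem errorScale_pos (γ : ℝ) {n : ℕ} (hn : 2 ≤ n) : 0 < errorScale γ n := by
  have hn' : (2 : ℝ) ≤ n := by exact_mod_cast hn
  have : (0 : ℝ) < n - 1 := by linarith
  unfold errorScale
  positivity

theorem tendsto_errorScale_div_errorScale_succ (γ : ℝ) :
    Tendsto (fun n => errorScale γ n / errorScale γ (n + 1)) atTop (𝓝 1) := by
  have h := (tendsto_one_sub_natCast_inv_rpow γ).mul
    ((tendsto_const_nhds (x := (1 : ℝ))).add tendsto_inv_atTop_nhds_zero_nat)
  rw [add_zero, mul_one] at h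
  refine h.congr' ?_
  filter_upwards [eventually_ge_atTop 1] with n hn
  have hn' : (1 : ℝ) ≤ n := by exact_mod_cast hn
  have hpow : (0 : ℝ) < (n : ℝ) ^ γ := by positivity
  rw [errorScale_succ, errorScale, sub_one_rpow_eq_rpow_mul hn']
  field_simp

noncomputable def twoTermApprox (a b γ : ℝ) (n : ℕ) : ℝ :=
  b * ((n : ℝ) - 1) ^ γ / (1 - a) - γ * a * b * ((n : ℝ) - 1) ^ γ / ((n : ℝ) * (1 - a) ^ 2)

theorem twoTermApprox_defect_isLittleO {a : ℝ} (ha : a ≠ 1) (b γ : ℝ) :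
    (fun n : ℕ => a * twoTermApprox a b γ n + b * (n : ℝ) ^ γ - twoTermApprox a b γ (n + 1))
      =o[atTop] fun n => errorScale γ (n + 1) := by
  set ρ : ℕ → ℝ := fun n => (1 - (n : ℝ)⁻¹) ^ γ
  have h1a : 1 - a ≠ 0 := sub_ne_zero.2 (Ne.symm ha)
  -- the witness is the quotient of the defect by `errorScale γ (n + 1) = n^γ / (n + 1)`,
  -- after writing `(n - 1)^γ = n^γ ρ n`
  refine isLittleO_iff_exists_eq_mul.2 ⟨fun n =>
    -(a * b / (1 - a)) * ((n : ℝ) * (1 - ρ n) + (1 - ρ n))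
      - γ * a ^ 2 * b / (1 - a) ^ 2 * (ρ n * (1 + (n : ℝ)⁻¹)) + γ * a * b / (1 - a) ^ 2,
    ?_, ?_⟩
  · have hρ := tendsto_one_sub_natCast_inv_rpow γ
    have hone :=
      (tendsto_const_nhds (x := (1 : ℝ))).add (tendsto_inv_atTop_nhds_zero_nat (𝕜 := ℝ))
    have h := (((tendsto_natCast_mul_one_sub_one_sub_inv_rpow γ).add
      ((tendsto_const_nhds (x := (1 : ℝ))).sub hρ)).const_mul (-(a * b / (1 - a)))).sub
      ((hρ.mul hone).const_mul (γ * a ^ 2 * b / (1 - a) ^ 2))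
        |>.add_const (γ * a * b / (1 - a) ^ 2)
    convert h using 2
    field_simp
    ring
  · filter_upwards [eventually_ge_atTop 1] with n hn
    have hn' : (1 : ℝ) ≤ n := by exact_mod_cast hn
    have hpow : (0 : ℝ) < (n : ℝ) ^ γ := by positivity
    simp only [Pi.mul_apply, errorScale_succ, twoTermApprox, ρ]
    push_cast
    rw [add_sub_cancel_right, sub_one_rpow_eq_rpow_mul hn']
    field_simp
    ring

theorem difference_equation_asymptotics_general
    (a b γ : ℝ) (ha : |a| < 1)
    (bseq : ℕ → ℝ) (hb : ∀ n : ℕ, 1 ≤ n → bseq n = b * (n : ℝ) ^ γ)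
    (x : ℕ → ℝ)
    (hrec : ∀ n : ℕ, 1 ≤ n → x (n + 1) = a * x n + bseq n) :
    (fun n : ℕ => x n - b * ((n : ℝ) - 1) ^ γ / (1 - a)
        + γ * a * b * ((n : ℝ) - 1) ^ γ / ((n : ℝ) * (1 - a) ^ 2))
      =o[atTop] fun n : ℕ => ((n : ℝ) - 1) ^ γ / (n : ℝ) := by
  have ha1 : a ≠ 1 := by rintro rfl; simp at ha
  have herr : (fun n => x n - twoTermApprox a b γ n) =o[atTop] errorScale γ := by
    refine isLittleO_of_eventually_eq_smul_add ha ?_ ?_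
      (tendsto_errorScale_div_errorScale_succ γ) (twoTermApprox_defect_isLittleO ha1 b γ)
    · filter_upwards [eventually_ge_atTop 1] with n hn
      rw [hrec n hn, hb n hn, smul_eq_mul]
      ring
    · filter_upwards [eventually_ge_atTop 2] with n hn
      exact (errorScale_pos γ hn).ne'
  exact herr.congr_left fun n => by simp only [twoTermApprox]; ring

/-- Proposition 2.1(ii): if `x_{n+1} = a * x_n + b_n` for `n ≥ 1`, with `|a| < 1` and
`b_n = b * n^γ` for some `γ > -1`, then
`x_n = b_{n-1}/(1-a) - (γ a b_{n-1} / (n (1-a)^2)) (1 + o(1))` as `n → ∞`,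
i.e. `x_n - b (n-1)^γ/(1-a) + γ a b (n-1)^γ/(n (1-a)^2) = o((n-1)^γ / n)`. -/
theorem difference_equation_asymptotics
    (a b γ : ℝ) (ha : |a| < 1) (hγ : γ > -1)
    (bseq : ℕ → ℝ) (hb : ∀ n : ℕ, 1 ≤ n → bseq n = b * (n : ℝ) ^ γ)
    (x : ℕ → ℝ)
    (hrec : ∀ n : ℕ, 1 ≤ n → x (n + 1) = a * x n + bseq n) :
    (fun n : ℕ => x n - b * ((n : ℝ) - 1) ^ γ / (1 - a)
        + γ * a * b * ((n : ℝ) - 1) ^ γ / ((n : ℝ) * (1 - a) ^ 2))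
      =o[atTop] fun n : ℕ => ((n : ℝ) - 1) ^ γ / (n : ℝ) :=
  difference_equation_asymptotics_general a b γ ha bseq hb x hrec
end

section
/- For every n ≥ 0, the expected number of nonzero steps satisfies E[N*_{n+1}] = Γ(n+2-r)/(Γ(1-r)·Γ(n+1)). -/
open MeasureTheory Filter

/-! Taking expectations in `E[I*_{n+1} | F_n] = (1 - r) N*_n / n` gives the recurrence
`E N*_{n+1} = (1 + (1 - r)/n) E N*_n` with `E N*_1 = 1 - r`, and with `a = 1 - r` the ratio
`Γ(n + 1 + a) / (Γ(a) Γ(n + 1))` solves it, by `Γ(s + 1) = s Γ(s)`. -/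

theorem Real.eq_Gamma_div_of_succ_eq_mul {a : ℝ} (ha : 0 < a) {e : ℕ → ℝ} (h0 : e 0 = a)
    (hsucc : ∀ n : ℕ, e (n + 1) = (1 + a / ((n : ℝ) + 1)) * e n) (n : ℕ) :
    e n = Real.Gamma ((n : ℝ) + 1 + a) / (Real.Gamma a * Real.Gamma ((n : ℝ) + 1)) := by
  have hGa : Real.Gamma a ≠ 0 := (Real.Gamma_pos_of_pos ha).ne'
  induction n with
  | zero =>
    rw [h0, Nat.cast_zero, zero_add, add_comm, Real.Gamma_add_one ha.ne',
      Real.Gamma_one]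
    field_simp
  | succ n ih =>
    have hn : (0 : ℝ) < (n : ℝ) + 1 := by positivity
    have hGn : Real.Gamma ((n : ℝ) + 1) ≠ 0 := (Real.Gamma_pos_of_pos hn).ne'
    rw [hsucc, ih, Nat.cast_succ, add_right_comm (n + 1 : ℝ) 1 a,
      Real.Gamma_add_one (by positivity : (n : ℝ) + 1 + a ≠ 0), Real.Gamma_add_one hn.ne']
    field_simp

theorem MeasureTheory.integral_eq_mul_of_condExp_eq_mul {Ω : Type*} {m m0 : MeasurableSpace Ω}
    {μ : Measure Ω} [IsFiniteMeasure μ] (hm : m ≤ m0) {X Y : Ω → ℝ} {c : ℝ}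
    (h : μ[X|m] =ᵐ[μ] fun ω => c * Y ω) :
    ∫ ω, X ω ∂μ = c * ∫ ω, Y ω ∂μ := by
  rw [← integral_condExp hm, integral_congr_ae h, integral_const_mul]

theorem MeasureTheory.integral_sum_Icc_succ_of_condExp_eq_mul {Ω : Type*} {m0 : MeasurableSpace Ω}
    {μ : Measure Ω} [IsFiniteMeasure μ] (𝓕 : Filtration ℕ m0) {I : ℕ → Ω → ℝ}
    (hint : ∀ k, 1 ≤ k → Integrable (I k) μ) {n : ℕ} {c : ℝ}
    (hcond : μ[I (n + 1)|𝓕 n] =ᵐ[μ] fun ω => c * ∑ k ∈ Finset.Icc 1 n, I k ω) :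
    ∫ ω, ∑ k ∈ Finset.Icc 1 (n + 1), I k ω ∂μ
      = (1 + c) * ∫ ω, ∑ k ∈ Finset.Icc 1 n, I k ω ∂μ := by
  have hsum_int : Integrable (fun ω => ∑ k ∈ Finset.Icc 1 n, I k ω) μ :=
    integrable_finsetSum _ fun k hk => hint k (Finset.mem_Icc.mp hk).1
  simp_rw [Finset.sum_Icc_succ_top (Nat.le_add_left 1 n)]
  rw [integral_add hsum_int (hint (n + 1) (Nat.le_add_left 1 n)),
    integral_eq_mul_of_condExp_eq_mul (𝓕.le n) hcond]
  ring

theorem expected_nonzero_steps_general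
    {Ω : Type*} [m0 : MeasurableSpace Ω] (μ : Measure Ω) [IsProbabilityMeasure μ]
    (𝓕 : Filtration ℕ m0) (r : ℝ) (hr1 : r < 1)
    (Istar : ℕ → Ω → ℝ)
    (hint : ∀ n : ℕ, 1 ≤ n → Integrable (Istar n) μ)
    (Nstar : ℕ → Ω → ℝ)
    (hN : ∀ n ω, Nstar n ω = ∑ k ∈ Finset.Icc 1 n, Istar k ω)
    (hI1 : ∫ ω, Istar 1 ω ∂μ = 1 - r)
    (hcond : ∀ n : ℕ, 1 ≤ n →
      (μ[Istar (n + 1)|𝓕 n]) =ᵐ[μ] fun ω => ((1 - r) / (n : ℝ)) * Nstar n ω) :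
    ∀ n : ℕ, ∫ ω, Nstar (n + 1) ω ∂μ =
      Real.Gamma ((n : ℝ) + 2 - r) / (Real.Gamma (1 - r) * Real.Gamma ((n : ℝ) + 1)) := by
  obtain rfl : Nstar = fun n ω => ∑ k ∈ Finset.Icc 1 n, Istar k ω :=
    funext fun n => funext (hN n)
  intro n
  have hsolve := Real.eq_Gamma_div_of_succ_eq_mul (sub_pos.mpr hr1)
    (e := fun n => ∫ ω, ∑ k ∈ Finset.Icc 1 (n + 1), Istar k ω ∂μ) (by simpa using hI1)
    (fun n => by
      have h := hcond (n + 1) (Nat.le_add_left 1 n)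
      push_cast at h
      rw [integral_sum_Icc_succ_of_condExp_eq_mul 𝓕 hint h]) n
  rw [hsolve, show (n : ℝ) + 1 + (1 - r) = n + 2 - r by ring]

/-- For the ERW with delays and full memory, the expected number of nonzero steps
satisfies `E[N*_{n+1}] = Γ(n+2-r) / (Γ(1-r) Γ(n+1))` for every `n ≥ 0`. -/
theorem expected_nonzero_steps
    {Ω : Type*} [m0 : MeasurableSpace Ω] (μ : Measure Ω) [IsProbabilityMeasure μ]
    (𝓕 : Filtration ℕ m0) (r : ℝ) (hr0 : 0 < r) (hr1 : r < 1)
    (Istar : ℕ → Ω → ℝ)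
    (h01 : ∀ n : ℕ, 1 ≤ n → ∀ ω, Istar n ω = 0 ∨ Istar n ω = 1)
    (hadapt : ∀ n : ℕ, 1 ≤ n → StronglyMeasurable[𝓕 n] (Istar n))
    (hint : ∀ n : ℕ, 1 ≤ n → Integrable (Istar n) μ)
    (Nstar : ℕ → Ω → ℝ)
    (hN : ∀ n ω, Nstar n ω = ∑ k ∈ Finset.Icc 1 n, Istar k ω)
    (hI1 : ∫ ω, Istar 1 ω ∂μ = 1 - r)
    (hcond : ∀ n : ℕ, 1 ≤ n →
      (μ[Istar (n + 1)|𝓕 n]) =ᵐ[μ] fun ω => ((1 - r) / (n : ℝ)) * Nstar n ω) :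
    ∀ n : ℕ, ∫ ω, Nstar (n + 1) ω ∂μ =
      Real.Gamma ((n : ℝ) + 2 - r) / (Real.Gamma (1 - r) * Real.Gamma ((n : ℝ) + 1)) :=
  expected_nonzero_steps_general (m0 := m0) μ 𝓕 r hr1 Istar hint Nstar hN hI1 hcond
end

section
/- As n → ∞, E[N*_{n+1}] = n^{1-r}/Γ(1-r) + n^{-r}·(1-r)(2-r)/(2·Γ(1-r)) + O(n^{-r-1}). -/
/-!
Put `s = 1 - r`. Taking expectations in the conditional-mean recursion gives
`E[N*_{n+1}] = (1 + s/n) E[N*_n]`, so `E[N*_{n+1}] = G(n) / Γ(s)` with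
`G(n) = Γ(n+1+s) / Γ(n+1)` (`gammaRatio s n`), and everything reduces to expanding `G(n)` to
second order.

Gautschi's inequality `n^s ≤ G(n) ≤ (n+1)^s`, a consequence of the log-convexity of `Γ`, shows
that `W(n) = T(n) / G(n) → 1` for `T(n) = n^s + s(s+1)/2 · n^(s-1)` (`gammaRatioApprox s n`).
As `G(n+1) = G(n) (n+1+s)/(n+1)`, the increment `W(n+1) - W(n)` equals
`n^(s+1) ψ(1/n) / ((n+1+s) G(n))`, where `ψ` combines binomial-series remainders of order `h³`
(the terms in `h` and `h²` cancel precisely because of the choice of `T`). Hence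
`W(n+1) - W(n) = O(n⁻³)`, summing the tail gives `W(n) - 1 = O(n⁻²)`, and therefore
`G(n) - T(n) = G(n) (1 - W(n)) = O(n^(s-2))`.
-/

open MeasureTheory Filter Asymptotics Topology Real

namespace Real

lemma Gamma_add_le_Gamma_mul_rpow {s x : ℝ} (hs0 : 0 < s) (hs1 : s < 1) (hx : 0 < x) :
    Gamma (x + s) ≤ Gamma x * x ^ s := by
  have hG := Gamma_pos_of_pos hx
  have key := Gamma_mul_add_mul_le_rpow_Gamma_mul_rpow_Gamma hx (by linarith : 0 < x + 1)
    (by linarith : 0 < 1 - s) hs0 (by ring)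
  rw [show (1 - s) * x + s * (x + 1) = x + s by ring, Gamma_add_one hx.ne',
    mul_rpow hx.le hG.le] at key
  calc Gamma (x + s) ≤ Gamma x ^ (1 - s) * (x ^ s * Gamma x ^ s) := key
    _ = Gamma x ^ (1 - s + s) * x ^ s := by rw [rpow_add hG]; ring
    _ = Gamma x * x ^ s := by rw [sub_add_cancel, rpow_one]

lemma one_add_rpow_sub_sum_isBigO (a : ℝ) (n : ℕ) :
    (fun h : ℝ => (1 + h) ^ a - ∑ k ∈ Finset.range n, Ring.choose a k * h ^ k)
      =O[𝓝 0] fun h => h ^ n := by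
  have := (one_add_rpow_hasFPowerSeriesAt_zero (a := a)).isBigO_sub_partialSum_pow n
  simp only [zero_add, FormalMultilinearSeries.partialSum, binomialSeries,
    FormalMultilinearSeries.ofScalars_apply_eq, smul_eq_mul, norm_eq_abs, ← abs_pow] at this
  exact this.of_abs_right

lemma one_add_rpow_sub_linear_isBigO (a : ℝ) :
    (fun h : ℝ => (1 + h) ^ a - 1 - a * h) =O[𝓝 0] fun h => h ^ 2 := by
  simpa [Finset.sum_range_succ, sub_sub] using one_add_rpow_sub_sum_isBigO a 2

lemma one_add_rpow_sub_quadratic_isBigO (a : ℝ) :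
    (fun h : ℝ => (1 + h) ^ a - 1 - a * h - a * (a - 1) / 2 * h ^ 2)
      =O[𝓝 0] fun h => h ^ 3 := by
  have hchoose : Ring.choose a 2 = a * (a - 1) / 2 := by
    rw [Ring.choose_eq_smul]
    simp [descPochhammer_succ_right, Polynomial.smeval_mul, Polynomial.smeval_sub,
      Polynomial.smeval_X, Polynomial.smeval_one]
    ring
  simpa [Finset.sum_range_succ, sub_sub, hchoose] using one_add_rpow_sub_sum_isBigO a 3

end Real

lemma abs_sub_le_of_tendsto_of_abs_sub_succ_le {a c : ℕ → ℝ} {L : ℝ} {n : ℕ}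
    (ha : Tendsto a atTop (𝓝 L)) (hc : Tendsto c atTop (𝓝 0))
    (h : ∀ m ≥ n, |a (m + 1) - a m| ≤ c m - c (m + 1)) : |a n - L| ≤ c n := by
  have htelescope : ∀ m ≥ n, |a m - a n| ≤ c n - c m := by
    intro m hm
    induction m, hm using Nat.le_induction with
    | base => simp
    | succ m hm ih =>
      calc |a (m + 1) - a n| ≤ |a (m + 1) - a m| + |a m - a n| := abs_sub_le _ _ _
        _ ≤ c n - c (m + 1) := by linarith [h m hm]
  rw [abs_sub_comm]
  simpa using le_of_tendsto_of_tendsto ((ha.sub_const (a n)).abs)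
    (tendsto_const_nhds.sub hc) (eventually_atTop.2 ⟨n, htelescope⟩)

lemma inv_pow_three_le_inv_sq_sub_inv_add_one_sq {x : ℝ} (hx : 2 ≤ x) :
    x⁻¹ ^ 3 ≤ x⁻¹ ^ 2 - (x + 1)⁻¹ ^ 2 := by
  have hx0 : 0 < x := by linarith
  rw [inv_pow, inv_pow, inv_pow, inv_sub_inv (by positivity) (by positivity), inv_eq_one_div,
    div_le_div_iff₀ (by positivity) (by positivity)]
  nlinarith [mul_nonneg (mul_nonneg hx0.le hx0.le) (by nlinarith : (0 : ℝ) ≤ x ^ 2 - x - 1)]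

lemma isBigO_sub_of_tendsto_of_isBigO_sub_succ {a : ℕ → ℝ} {L : ℝ}
    (ha : Tendsto a atTop (𝓝 L))
    (h : (fun n => a (n + 1) - a n) =O[atTop] fun n : ℕ => (n : ℝ)⁻¹ ^ 3) :
    (fun n => a n - L) =O[atTop] fun n : ℕ => (n : ℝ)⁻¹ ^ 2 := by
  obtain ⟨C, hC0, hC⟩ := h.exists_nonneg
  obtain ⟨N, hN⟩ := eventually_atTop.1 hC.bound
  refine IsBigO.of_bound C ?_
  filter_upwards [eventually_ge_atTop (max N 2)] with n hn
  have hc : Tendsto (fun m : ℕ => C * (m : ℝ)⁻¹ ^ 2) atTop (𝓝 0) := by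
    simpa using ((tendsto_inv_atTop_nhds_zero_nat (𝕜 := ℝ)).pow 2).const_mul C
  rw [norm_of_nonneg (by positivity : (0 : ℝ) ≤ (n : ℝ)⁻¹ ^ 2), norm_eq_abs]
  refine abs_sub_le_of_tendsto_of_abs_sub_succ_le ha hc fun m hm => ?_
  have hm2 : (2 : ℝ) ≤ m := by exact_mod_cast (le_max_right N 2).trans (hn.trans hm)
  calc |a (m + 1) - a m| ≤ C * (m : ℝ)⁻¹ ^ 3 := by
        simpa [abs_of_nonneg (by positivity : (0 : ℝ) ≤ (m : ℝ)⁻¹ ^ 3)] using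
          hN m ((le_max_left N 2).trans (hn.trans hm))
    _ ≤ C * (m : ℝ)⁻¹ ^ 2 - C * ((m + 1 : ℕ) : ℝ)⁻¹ ^ 2 := by
        rw [← mul_sub, Nat.cast_succ]
        exact mul_le_mul_of_nonneg_left (inv_pow_three_le_inv_sq_sub_inv_add_one_sq hm2) hC0

noncomputable def gammaRatio (s : ℝ) (n : ℕ) : ℝ := Gamma (n + 1 + s) / Gamma (n + 1)

noncomputable def gammaRatioApprox (s x : ℝ) : ℝ := x ^ s + s * (s + 1) / 2 * x ^ (s - 1)

section gammaRatio

variable {s : ℝ}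

lemma gammaRatio_pos (hs : -1 < s) (n : ℕ) : 0 < gammaRatio s n :=
  div_pos (Gamma_pos_of_pos (by linarith [n.cast_nonneg (α := ℝ)]))
    (Gamma_pos_of_pos (by positivity))

lemma gammaRatio_zero (hs : s ≠ 0) : gammaRatio s 0 = s * Gamma s := by
  rw [gammaRatio, Nat.cast_zero, zero_add, add_comm, Gamma_add_one hs, Gamma_one, div_one]

lemma gammaRatio_succ (hs : -1 < s) (n : ℕ) :
    gammaRatio s (n + 1) = (1 + s / (n + 1)) * gammaRatio s n := by
  have h1 : (n : ℝ) + 1 + s ≠ 0 := by linarith [n.cast_nonneg (α := ℝ)]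
  have h2 : (n : ℝ) + 1 ≠ 0 := by positivity
  rw [gammaRatio, gammaRatio, Nat.cast_succ, show (n : ℝ) + 1 + 1 + s = n + 1 + s + 1 by ring,
    Gamma_add_one h1, Gamma_add_one h2]
  field_simp

lemma rpow_le_gammaRatio (hs0 : 0 < s) (hs1 : s < 1) (n : ℕ) :
    (n : ℝ) ^ s ≤ gammaRatio s n := by
  have hx : (0 : ℝ) < n + s := by positivity
  have hG : 0 < Gamma ((n : ℝ) + 1) := Gamma_pos_of_pos (by positivity)
  have key := Gamma_add_le_Gamma_mul_rpow (by linarith : 0 < 1 - s) (by linarith) hx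
  rw [show (n : ℝ) + s + (1 - s) = n + 1 by ring] at key
  rw [gammaRatio, le_div_iff₀ hG]
  calc (n : ℝ) ^ s * Gamma (n + 1) ≤ (n + s) ^ s * (Gamma (n + s) * (n + s) ^ (1 - s)) :=
        mul_le_mul (rpow_le_rpow (by positivity) (by linarith) hs0.le) key hG.le (by positivity)
    _ = Gamma (n + s) * (n + s) ^ (s + (1 - s)) := by rw [rpow_add hx]; ring
    _ = Gamma (n + 1 + s) := by
        rw [add_sub_cancel, rpow_one, show (n : ℝ) + 1 + s = n + s + 1 by ring,
          Gamma_add_one hx.ne', mul_comm]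

lemma gammaRatio_le_rpow (hs0 : 0 < s) (hs1 : s < 1) (n : ℕ) :
    gammaRatio s n ≤ ((n : ℝ) + 1) ^ s := by
  have hx : (0 : ℝ) < n + 1 := by positivity
  rw [gammaRatio, div_le_iff₀ (Gamma_pos_of_pos hx), mul_comm]
  exact Gamma_add_le_Gamma_mul_rpow hs0 hs1 hx

lemma gammaRatio_isEquivalent (hs0 : 0 < s) (hs1 : s < 1) :
    gammaRatio s ~[atTop] fun n : ℕ => (n : ℝ) ^ s := by
  refine isEquivalent_of_tendsto_one ?_
  have hupper : Tendsto (fun n : ℕ => (1 + (n : ℝ)⁻¹) ^ s) atTop (𝓝 1) := by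
    simpa using ((tendsto_inv_atTop_nhds_zero_nat (𝕜 := ℝ)).const_add 1).rpow_const
      (Or.inr hs0.le)
  refine tendsto_of_tendsto_of_tendsto_of_le_of_le' tendsto_const_nhds hupper ?_ ?_
  · filter_upwards [eventually_gt_atTop 0] with n hn
    rw [Pi.div_apply, le_div_iff₀ (rpow_pos_of_pos (Nat.cast_pos.2 hn) s), one_mul]
    exact rpow_le_gammaRatio hs0 hs1 n
  · filter_upwards [eventually_gt_atTop 0] with n hn
    have hn' : (0 : ℝ) < n := Nat.cast_pos.2 hn
    rw [Pi.div_apply, div_le_iff₀ (rpow_pos_of_pos hn' s), ← mul_rpow (by positivity) hn'.le,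
      show (1 + (n : ℝ)⁻¹) * n = n + 1 by field_simp]
    exact gammaRatio_le_rpow hs0 hs1 n

variable (s) in
lemma gammaRatioApprox_isEquivalent :
    (fun n : ℕ => gammaRatioApprox s n) ~[atTop] fun n : ℕ => (n : ℝ) ^ s := by
  refine isEquivalent_of_tendsto_one ?_
  have hlim : Tendsto (fun n : ℕ => 1 + s * (s + 1) / 2 * (n : ℝ)⁻¹) atTop (𝓝 1) := by
    simpa using
      ((tendsto_inv_atTop_nhds_zero_nat (𝕜 := ℝ)).const_mul (s * (s + 1) / 2)).const_add 1
  refine hlim.congr' ?_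
  filter_upwards [eventually_gt_atTop 0] with n hn
  have hn' : (0 : ℝ) < n := Nat.cast_pos.2 hn
  rw [Pi.div_apply, gammaRatioApprox, rpow_sub_one hn'.ne']
  field_simp

lemma tendsto_gammaRatioApprox_div_gammaRatio (hs0 : 0 < s) (hs1 : s < 1) :
    Tendsto (fun n : ℕ => gammaRatioApprox s n / gammaRatio s n) atTop (𝓝 1) :=
  (isEquivalent_iff_tendsto_one
      (Eventually.of_forall fun n => (gammaRatio_pos (by linarith) n).ne')).1
    ((gammaRatioApprox_isEquivalent s).trans (gammaRatio_isEquivalent hs0 hs1).symm)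

/- The bracket is written as the remainders of `one_add_rpow_sub_quadratic_isBigO (s + 1)` and
`one_add_rpow_sub_linear_isBigO s`. -/
variable (s) in
lemma gammaRatioApprox_increment_eq {x : ℝ} (hx : 0 < x) :
    gammaRatioApprox s (x + 1) * (x + 1) - gammaRatioApprox s x * (x + 1 + s) =
      x ^ (s + 1) * ((1 + x⁻¹) ^ (s + 1) - 1 - (s + 1) * x⁻¹
        - (s + 1) * (s + 1 - 1) / 2 * x⁻¹ ^ 2
        + s * (s + 1) / 2 * x⁻¹ * ((1 + x⁻¹) ^ s - 1 - s * x⁻¹)) := by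
  have hx1 : (0 : ℝ) < x + 1 := by linarith
  have hsplit : (x + 1) ^ s = x ^ s * (1 + x⁻¹) ^ s := by
    rw [← mul_rpow hx.le (by positivity), mul_add, mul_inv_cancel₀ hx.ne', mul_one]
  rw [gammaRatioApprox, gammaRatioApprox, rpow_sub_one hx1.ne', rpow_sub_one hx.ne',
    rpow_add_one hx.ne', rpow_add_one (by positivity : (1 : ℝ) + x⁻¹ ≠ 0), hsplit]
  field_simp
  ring

variable (s) in
lemma gammaRatioApprox_increment_isBigO :
    (fun n : ℕ => gammaRatioApprox s (n + 1) * (n + 1) - gammaRatioApprox s n * (n + 1 + s))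
      =O[atTop] fun n : ℕ => (n : ℝ) ^ (s + 1) * (n : ℝ)⁻¹ ^ 3 := by
  have hdefect : (fun h : ℝ => (1 + h) ^ (s + 1) - 1 - (s + 1) * h
      - (s + 1) * (s + 1 - 1) / 2 * h ^ 2
      + s * (s + 1) / 2 * h * ((1 + h) ^ s - 1 - s * h)) =O[𝓝 0] fun h => h ^ 3 := by
    refine (one_add_rpow_sub_quadratic_isBigO (s + 1)).add ?_
    refine (((isBigO_refl (fun h : ℝ => h) _).mul
      (one_add_rpow_sub_linear_isBigO s)).const_mul_left (s * (s + 1) / 2)).congr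
      (fun h => by ring) (fun h => by ring)
  refine ((isBigO_refl _ _).mul (hdefect.comp_tendsto tendsto_inv_atTop_nhds_zero_nat)).congr' ?_
    EventuallyEq.rfl
  filter_upwards [eventually_gt_atTop 0] with n hn
  exact (gammaRatioApprox_increment_eq s (Nat.cast_pos.2 hn)).symm

lemma gammaRatioApprox_div_gammaRatio_succ_sub_isBigO (hs0 : 0 < s) (hs1 : s < 1) :
    (fun n : ℕ => gammaRatioApprox s ↑(n + 1) / gammaRatio s (n + 1)
        - gammaRatioApprox s n / gammaRatio s n) =O[atTop] fun n : ℕ => (n : ℝ)⁻¹ ^ 3 := by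
  have hden : (fun n : ℕ => ((n + 1 + s) * gammaRatio s n)⁻¹)
      =O[atTop] fun n : ℕ => ((n : ℝ) ^ (s + 1))⁻¹ := by
    refine IsBigO.of_bound' ?_
    filter_upwards [eventually_gt_atTop 0] with n hn
    have hn' : (0 : ℝ) < n := Nat.cast_pos.2 hn
    rw [norm_inv, norm_inv, norm_of_nonneg (rpow_nonneg hn'.le _),
      norm_of_nonneg (by have := gammaRatio_pos (s := s) (by linarith) n; positivity),
      rpow_add_one hn'.ne']
    refine inv_anti₀ (by positivity) ?_
    calc (n : ℝ) ^ s * n ≤ gammaRatio s n * (n + 1 + s) :=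
          mul_le_mul (rpow_le_gammaRatio hs0 hs1 n) (by linarith)
            hn'.le (gammaRatio_pos (by linarith) n).le
      _ = (n + 1 + s) * gammaRatio s n := mul_comm _ _
  refine ((gammaRatioApprox_increment_isBigO s).mul hden).congr' ?_ ?_
  · refine Eventually.of_forall fun n => ?_
    have hG := (gammaRatio_pos (s := s) (by linarith) n).ne'
    have hn : (n : ℝ) + 1 + s ≠ 0 := by linarith [n.cast_nonneg (α := ℝ)]
    dsimp only
    rw [gammaRatio_succ (by linarith), Nat.cast_succ]
    field_simp
  · filter_upwards [eventually_gt_atTop 0] with n hn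
    have := rpow_pos_of_pos (Nat.cast_pos.2 hn : (0 : ℝ) < n) (s + 1)
    field_simp

theorem gammaRatio_sub_gammaRatioApprox_isBigO (hs0 : 0 < s) (hs1 : s < 1) :
    (fun n : ℕ => gammaRatio s n - gammaRatioApprox s n)
      =O[atTop] fun n : ℕ => (n : ℝ) ^ (s - 2) := by
  have hratio := isBigO_sub_of_tendsto_of_isBigO_sub_succ
    (tendsto_gammaRatioApprox_div_gammaRatio hs0 hs1)
    (gammaRatioApprox_div_gammaRatio_succ_sub_isBigO hs0 hs1)
  refine ((gammaRatio_isEquivalent hs0 hs1).isBigO.mul hratio).neg_left.congr' ?_ ?_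
  · refine Eventually.of_forall fun n => ?_
    have := (gammaRatio_pos (s := s) (by linarith) n).ne'
    field_simp
    ring
  · filter_upwards [eventually_gt_atTop 0] with n hn
    rw [rpow_sub (Nat.cast_pos.2 hn), rpow_two, inv_pow, div_eq_mul_inv]

lemma eq_gammaRatio_div_Gamma_of_succ_eq (hs : 0 < s) {a : ℕ → ℝ} (h1 : a 1 = s)
    (h : ∀ n, 1 ≤ n → a (n + 1) = (1 + s / n) * a n) (n : ℕ) :
    a (n + 1) = gammaRatio s n / Gamma s := by
  induction n with
  | zero => rw [h1, gammaRatio_zero hs.ne', mul_div_cancel_right₀ _ (Gamma_pos_of_pos hs).ne']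
  | succ n ih =>
    rw [h (n + 1) (by omega), ih, gammaRatio_succ (by linarith) n, Nat.cast_succ]
    ring

end gammaRatio

theorem expected_nonzero_steps_asymptotics_general
    {Ω : Type*} [m0 : MeasurableSpace Ω] (μ : Measure Ω) [IsProbabilityMeasure μ]
    (𝓕 : Filtration ℕ m0) (r : ℝ) (hr0 : 0 < r) (hr1 : r < 1)
    (Istar : ℕ → Ω → ℝ)
    (hint : ∀ n : ℕ, 1 ≤ n → Integrable (Istar n) μ)
    (Nstar : ℕ → Ω → ℝ)
    (hN : ∀ n ω, Nstar n ω = ∑ k ∈ Finset.Icc 1 n, Istar k ω)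
    (hI1 : ∫ ω, Istar 1 ω ∂μ = 1 - r)
    (hcond : ∀ n : ℕ, 1 ≤ n →
      (μ[Istar (n + 1)|𝓕 n]) =ᵐ[μ] fun ω => ((1 - r) / (n : ℝ)) * Nstar n ω) :
    (fun n : ℕ => (∫ ω, Nstar (n + 1) ω ∂μ)
        - ((n : ℝ) ^ (1 - r) / Real.Gamma (1 - r)
            + (n : ℝ) ^ (-r) * ((1 - r) * (2 - r)) / (2 * Real.Gamma (1 - r))))
      =O[atTop] fun n : ℕ => (n : ℝ) ^ (-r - 1) := by
  have hNint (n : ℕ) : Integrable (Nstar n) μ := by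
    simpa only [← hN] using integrable_finsetSum _ fun k hk => hint k (Finset.mem_Icc.1 hk).1
  have h1 : ∫ ω, Nstar 1 ω ∂μ = 1 - r := by simpa [hN] using hI1
  have hrec (n : ℕ) (hn : 1 ≤ n) :
      ∫ ω, Nstar (n + 1) ω ∂μ = (1 + (1 - r) / n) * ∫ ω, Nstar n ω ∂μ := by
    have hsplit (ω : Ω) : Nstar (n + 1) ω = Nstar n ω + Istar (n + 1) ω := by
      simp [hN, Finset.sum_Icc_succ_top (by omega : 1 ≤ n + 1)]
    have hstep : ∫ ω, Istar (n + 1) ω ∂μ = (1 - r) / n * ∫ ω, Nstar n ω ∂μ := by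
      rw [← integral_condExp (𝓕.le n), integral_congr_ae (hcond n hn), integral_const_mul]
    simp_rw [hsplit]
    rw [integral_add (hNint n) (hint _ (by omega)), hstep]
    ring
  have hformula := eq_gammaRatio_div_Gamma_of_succ_eq (s := 1 - r)
    (a := fun n => ∫ ω, Nstar n ω ∂μ) (by linarith) h1 hrec
  refine ((gammaRatio_sub_gammaRatioApprox_isBigO (s := 1 - r) (by linarith)
    (by linarith)).const_mul_left (Gamma (1 - r))⁻¹).congr (fun n => ?_) (fun n => ?_)
  · rw [hformula, gammaRatioApprox, show 1 - r - 1 = -r by ring]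
    ring
  · rw [show 1 - r - 2 = -r - 1 by ring]

/-- For the ERW with delays and full memory, as `n → ∞`,
`E[N*_{n+1}] = n^{1-r}/Γ(1-r) + n^{-r} (1-r)(2-r)/(2Γ(1-r)) + O(n^{-r-1})`. -/
theorem expected_nonzero_steps_asymptotics
    {Ω : Type*} [m0 : MeasurableSpace Ω] (μ : Measure Ω) [IsProbabilityMeasure μ]
    (𝓕 : Filtration ℕ m0) (r : ℝ) (hr0 : 0 < r) (hr1 : r < 1)
    (Istar : ℕ → Ω → ℝ)
    (h01 : ∀ n : ℕ, 1 ≤ n → ∀ ω, Istar n ω = 0 ∨ Istar n ω = 1)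
    (hadapt : ∀ n : ℕ, 1 ≤ n → StronglyMeasurable[𝓕 n] (Istar n))
    (hint : ∀ n : ℕ, 1 ≤ n → Integrable (Istar n) μ)
    (Nstar : ℕ → Ω → ℝ)
    (hN : ∀ n ω, Nstar n ω = ∑ k ∈ Finset.Icc 1 n, Istar k ω)
    (hI1 : ∫ ω, Istar 1 ω ∂μ = 1 - r)
    (hcond : ∀ n : ℕ, 1 ≤ n →
      (μ[Istar (n + 1)|𝓕 n]) =ᵐ[μ] fun ω => ((1 - r) / (n : ℝ)) * Nstar n ω) :
    (fun n : ℕ => (∫ ω, Nstar (n + 1) ω ∂μ)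
        - ((n : ℝ) ^ (1 - r) / Real.Gamma (1 - r)
            + (n : ℝ) ^ (-r) * ((1 - r) * (2 - r)) / (2 * Real.Gamma (1 - r))))
      =O[atTop] fun n : ℕ => (n : ℝ) ^ (-r - 1) :=
  expected_nonzero_steps_asymptotics_general (m0 := m0) μ 𝓕 r hr0 hr1 Istar hint Nstar hN hI1 hcond
end

section
/- Let M*_n = α*_n·N*_n with α*_k = Γ(k)·Γ(2-r)/Γ(k+1-r), and let ε*_{n+1} = M*_{n+1} - M*_n be the martingale differences. Then E[(ε*_{n+1})^2 | F_n] = (α*_{n+1})^2·( ((1-r)/n)·N*_n - ((1-r)^2/n^2)·(N*_n)^2 ) almost surely, E[(ε*_{n+1})^2] ~ (1-r)^3·Γ(1-r)·n^{r-2} as n → ∞, and the expected value of the predictable quadratic variation ⟨M*⟩_n = Σ_{k=1}^n E[(ε*_k)^2 | F_{k-1}] remains bounded: sup_n E[⟨M*⟩_n] < ∞. -/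
/-!
With `p_n = (1 - r) / n`, the identity `α*_{n+1} (1 + p_n) = α*_n` turns the martingale difference
into `ε*_{n+1} = α*_{n+1} (I*_{n+1} - p_n N*_n)`. Given `𝓕_n`, `I*_{n+1}` is Bernoulli with
mean `q = p_n N*_n`, so `(I*_{n+1} - q)²` has conditional mean `q - q²`; this is the first claim.

Taking expectations, `E[N*_{n+1}] = (1 + p_n) E[N*_n]` and
`E[N*_{n+1}(N*_{n+1} + 1)] = (1 + 2 p_n) E[N*_n(N*_n + 1)]`. Hence `α*_n E[N*_n] = 1 - r`, and
since `1 + 2 p_n ≤ (1 + p_n)²`, `α*_n² E[N*_n(N*_n + 1)] ≤ 2 (1 - r)`. So `E[(ε*_{n+1})²]` equals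
`(1 - r)² (α*_{n+1})² / (n α*_n)` up to `O(n⁻²)`, and Euler's limit formula for `Γ` gives
`α*_{n+1} n^{1-r} → Γ(2 - r)`. The bracket stays bounded because `n^{r-2}` is summable.
-/

open MeasureTheory Filter Asymptotics Topology

lemma Real.prod_range_add_eq_Gamma_div {s : ℝ} (hs : 0 < s) (n : ℕ) :
    ∏ j ∈ Finset.range n, (s + j) = Real.Gamma (s + n) / Real.Gamma s := by
  induction n with
  | zero => simp [(Real.Gamma_pos_of_pos hs).ne']
  | succ n ih =>
    have hsn : 0 < s + n := by positivity
    rw [Finset.prod_range_succ, ih, Nat.cast_succ, ← add_assoc, Real.Gamma_add_one hsn.ne']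
    ring

lemma isLittleO_natCast_rpow_of_norm_le_div_sq {f : ℕ → ℝ} {C s : ℝ} (hs : -2 < s)
    (hf : ∀ᶠ n in atTop, ‖f n‖ ≤ C / (n : ℝ) ^ 2) : f =o[atTop] fun n : ℕ => (n : ℝ) ^ s := by
  have hO : f =O[atTop] fun n : ℕ => (n : ℝ) ^ (-(2 + s)) * (n : ℝ) ^ s := by
    refine IsBigO.of_bound C ?_
    filter_upwards [hf, eventually_ge_atTop 1] with n hfn hn
    have hn' : (0 : ℝ) < n := by exact_mod_cast hn
    rwa [← Real.rpow_add hn', show -(2 + s) + s = -2 by ring, Real.rpow_neg hn'.le,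
      Real.rpow_two, norm_inv, norm_pow, Real.norm_natCast, ← div_eq_mul_inv]
  have hlim : Tendsto (fun n : ℕ => (n : ℝ) ^ (-(2 + s))) atTop (𝓝 0) :=
    (tendsto_rpow_neg_atTop (by linarith)).comp tendsto_natCast_atTop_atTop
  refine hO.trans_isLittleO ?_
  simpa only [one_mul] using (isLittleO_one_iff ℝ |>.2 hlim).mul_isBigO
    (isBigO_refl (fun n : ℕ => (n : ℝ) ^ s) atTop)

section condExp

variable {Ω : Type*} {m m0 : MeasurableSpace Ω} {μ : Measure[m0] Ω} [IsFiniteMeasure μ]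

lemma integral_mul_eq_of_condExp_eq (hm : m ≤ m0) {X Y q : Ω → ℝ} {C : ℝ}
    (hX : StronglyMeasurable[m] X) (hXC : ∀ ω, ‖X ω‖ ≤ C) (hY : Integrable Y μ)
    (hYq : μ[Y|m] =ᵐ[μ] q) :
    ∫ ω, X ω * Y ω ∂μ = ∫ ω, X ω * q ω ∂μ := by
  have hXY : Integrable (X * Y) μ :=
    hY.bdd_mul ((hX.mono hm).aestronglyMeasurable) (ae_of_all _ hXC)
  rw [← integral_condExp hm]
  refine integral_congr_ae ?_
  filter_upwards [condExp_mul_of_stronglyMeasurable_left hX hXY hY, hYq] with ω h hq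
  exact h.trans (by rw [Pi.mul_apply, hq])

lemma condExp_sq_sub_of_zero_or_one (hm : m ≤ m0) {I q : Ω → ℝ} {C : ℝ}
    (hI : ∀ ω, I ω = 0 ∨ I ω = 1) (hIint : Integrable I μ)
    (hq : StronglyMeasurable[m] q) (hqC : ∀ ω, ‖q ω‖ ≤ C) (hIq : μ[I|m] =ᵐ[μ] q) :
    μ[fun ω => (I ω - q ω) ^ 2|m] =ᵐ[μ] fun ω => q ω - q ω ^ 2 := by
  have hlin : StronglyMeasurable[m] fun ω => 1 - 2 * q ω :=
    stronglyMeasurable_const.sub (hq.const_mul 2)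
  have hlinI : Integrable ((fun ω => 1 - 2 * q ω) * I) μ :=
    hIint.bdd_mul (c := 1 + 2 * C) (hlin.mono hm).aestronglyMeasurable
      (ae_of_all _ fun ω => (norm_sub_le _ _).trans (by
        rw [norm_one, norm_mul, Real.norm_ofNat]; linarith [hqC ω]))
  have hqsq : StronglyMeasurable[m] fun ω => q ω ^ 2 := hq.pow 2
  have hqsq_int : Integrable (fun ω => q ω ^ 2) μ :=
    Integrable.of_bound (hqsq.mono hm).aestronglyMeasurable (C ^ 2) (ae_of_all _ fun ω => by
      simpa [norm_pow] using pow_le_pow_left₀ (norm_nonneg _) (hqC ω) 2)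
  have hsplit :
      (fun ω => (I ω - q ω) ^ 2) = (fun ω => 1 - 2 * q ω) * I + fun ω => q ω ^ 2 := by
    ext ω
    rcases hI ω with h | h <;> simp only [Pi.add_apply, Pi.mul_apply, h] <;> ring
  rw [hsplit]
  filter_upwards [condExp_add hlinI hqsq_int m,
    condExp_mul_of_stronglyMeasurable_left hlin hlinI hIint, hIq] with ω hadd hmul hω
  rw [hadd, Pi.add_apply, hmul, condExp_of_stronglyMeasurable hm hqsq hqsq_int, Pi.mul_apply, hω]
  ring

end condExp

lemma exists_integral_add_sum_condExp_le {Ω : Type*} [m0 : MeasurableSpace Ω] {μ : Measure Ω}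
    [IsFiniteMeasure μ] (𝓕 : Filtration ℕ m0) {f : ℕ → Ω → ℝ} (hf : ∀ k ω, 0 ≤ f k ω)
    (hf1 : Integrable (f 1) μ) (hsum : Summable fun k => ∫ ω, f k ω ∂μ) :
    ∃ C, ∀ n, ∫ ω, (f 1 ω + ∑ k ∈ Finset.Icc 2 n, (μ[f k|𝓕 (k - 1)]) ω) ∂μ ≤ C := by
  refine ⟨∫ ω, f 1 ω ∂μ + ∑' k, ∫ ω, f k ω ∂μ, fun n => ?_⟩
  rw [integral_add hf1 (integrable_finsetSum _ fun _ _ => integrable_condExp),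
    integral_finsetSum _ fun _ _ => integrable_condExp]
  simp_rw [integral_condExp (𝓕.le _)]
  gcongr
  exact hsum.sum_le_tsum _ fun k _ => integral_nonneg (hf k)

/-- The paper's `α*_k`. -/
noncomputable def gammaWeight (r : ℝ) (k : ℕ) : ℝ :=
  Real.Gamma (k : ℝ) * Real.Gamma (2 - r) / Real.Gamma ((k : ℝ) + 1 - r)

section gammaWeight

variable {r : ℝ}

lemma gammaWeight_pos (hr : r < 1) {k : ℕ} (hk : 1 ≤ k) : 0 < gammaWeight r k := by
  have hk' : (1 : ℝ) ≤ k := by exact_mod_cast hk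
  unfold gammaWeight
  have := Real.Gamma_pos_of_pos (by linarith : (0 : ℝ) < k)
  have := Real.Gamma_pos_of_pos (by linarith : (0 : ℝ) < 2 - r)
  have := Real.Gamma_pos_of_pos (by linarith : (0 : ℝ) < k + 1 - r)
  positivity

lemma gammaWeight_one (hr : r < 1) : gammaWeight r 1 = 1 := by
  have := Real.Gamma_pos_of_pos (by linarith : (0 : ℝ) < 2 - r)
  simp [gammaWeight, show (1 : ℝ) + 1 - r = 2 - r by ring, this.ne']

lemma gammaWeight_succ_mul (hr : r < 1) {n : ℕ} (hn : 1 ≤ n) :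
    gammaWeight r (n + 1) * (1 + (1 - r) / n) = gammaWeight r n := by
  have hn' : (1 : ℝ) ≤ n := by exact_mod_cast hn
  have hΓ := Real.Gamma_pos_of_pos (by linarith : (0 : ℝ) < n + 1 - r)
  unfold gammaWeight
  rw [Nat.cast_succ, Real.Gamma_add_one (by positivity),
    show (n : ℝ) + 1 + 1 - r = (n + 1 - r) + 1 by ring,
    Real.Gamma_add_one (s := n + 1 - r) (by linarith)]
  have : (n : ℝ) + 1 - r ≠ 0 := by linarith
  field_simp
  ring

lemma gammaWeight_succ_le (hr : r < 1) {n : ℕ} (hn : 1 ≤ n) :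
    gammaWeight r (n + 1) ≤ gammaWeight r n := by
  rw [← gammaWeight_succ_mul hr hn]
  have := gammaWeight_pos hr (Nat.le_succ_of_le hn)
  have : 0 ≤ (1 - r) / n := div_nonneg (by linarith) n.cast_nonneg
  nlinarith

lemma gammaWeight_succ_mul_rpow (hr : r < 1) (n : ℕ) :
    gammaWeight r (n + 1) * (n : ℝ) ^ (1 - r) = (1 - r) * Real.GammaSeq (1 - r) n := by
  have h1r : 0 < 1 - r := by linarith
  have hΓ := Real.Gamma_pos_of_pos (by positivity : (0 : ℝ) < 1 - r + (n + 1 : ℕ))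
  rw [gammaWeight, Real.GammaSeq, Real.prod_range_add_eq_Gamma_div h1r]
  push_cast
  rw [Real.Gamma_nat_eq_factorial, show (2 : ℝ) - r = 1 - r + 1 by ring,
    Real.Gamma_add_one h1r.ne', show (n : ℝ) + 1 + 1 - r = 1 - r + (n + 1) by ring]
  field_simp

lemma tendsto_gammaWeight_succ_mul_rpow (hr : r < 1) :
    Tendsto (fun n : ℕ => gammaWeight r (n + 1) * (n : ℝ) ^ (1 - r)) atTop
      (𝓝 ((1 - r) * Real.Gamma (1 - r))) := by
  simpa only [gammaWeight_succ_mul_rpow hr] using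
    (Real.GammaSeq_tendsto_Gamma (1 - r)).const_mul (1 - r)

lemma tendsto_gammaWeight_succ_div (hr : r < 1) :
    Tendsto (fun n : ℕ => gammaWeight r (n + 1) / gammaWeight r n) atTop (𝓝 1) := by
  refine (tendsto_natCast_div_add_atTop (1 - r)).congr' ?_
  filter_upwards [eventually_ge_atTop 1] with n hn
  have hn' : (1 : ℝ) ≤ n := by exact_mod_cast hn
  rw [← gammaWeight_succ_mul hr hn, div_mul_cancel_left₀ (gammaWeight_pos hr (by omega)).ne']
  field_simp

lemma isEquivalent_gammaWeight_sq_div (hr : r < 1) :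
    (fun n : ℕ => (1 - r) ^ 2 * gammaWeight r (n + 1) ^ 2 / (n * gammaWeight r n))
      ~[atTop] fun n : ℕ => (1 - r) ^ 3 * Real.Gamma (1 - r) * (n : ℝ) ^ (r - 2) := by
  have hc : (1 - r) ^ 3 * Real.Gamma (1 - r) ≠ 0 :=
    (mul_pos (pow_pos (by linarith) 3) (Real.Gamma_pos_of_pos (by linarith))).ne'
  have hlim : Tendsto (fun n : ℕ => (1 - r) ^ 2 * (gammaWeight r (n + 1) / gammaWeight r n)
      * (gammaWeight r (n + 1) * (n : ℝ) ^ (1 - r))) atTop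
      (𝓝 ((1 - r) ^ 3 * Real.Gamma (1 - r))) := by
    convert ((tendsto_gammaWeight_succ_div hr).const_mul _).mul
      (tendsto_gammaWeight_succ_mul_rpow hr) using 2
    ring
  refine (((isEquivalent_const_iff_tendsto hc).2 hlim).mul
    (IsEquivalent.refl (u := fun n : ℕ => (n : ℝ) ^ (r - 2)))).congr_left ?_
  filter_upwards [eventually_ge_atTop 1] with n hn
  have hn' : (0 : ℝ) < n := by exact_mod_cast hn
  have hrpow : (n : ℝ) ^ (1 - r) * (n : ℝ) ^ (r - 2) = (n : ℝ)⁻¹ := by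
    rw [← Real.rpow_add hn', show 1 - r + (r - 2) = -1 by ring, Real.rpow_neg_one]
  have := (gammaWeight_pos hr hn).ne'
  simp only [Pi.mul_apply]
  calc _ = (1 - r) ^ 2 * (gammaWeight r (n + 1) / gammaWeight r n) * gammaWeight r (n + 1)
        * ((n : ℝ) ^ (1 - r) * (n : ℝ) ^ (r - 2)) := by ring
    _ = _ := by rw [hrpow]; field_simp

lemma isLittleO_gammaWeight_sq_mul (hr0 : 0 < r) (hr1 : r < 1) {V : ℕ → ℝ} {K : ℝ}
    (hV : ∀ n, 1 ≤ n → 0 ≤ V n) (hVK : ∀ n, 1 ≤ n → gammaWeight r n ^ 2 * V n ≤ K) :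
    (fun n : ℕ => gammaWeight r (n + 1) ^ 2 * ((1 - r) ^ 2 / (n : ℝ) ^ 2 * V n))
      =o[atTop] fun n : ℕ => (n : ℝ) ^ (r - 2) := by
  refine isLittleO_natCast_rpow_of_norm_le_div_sq (C := (1 - r) ^ 2 * K) (by linarith) ?_
  filter_upwards [eventually_ge_atTop 1] with n hn
  have hle : gammaWeight r (n + 1) ^ 2 ≤ gammaWeight r n ^ 2 :=
    pow_le_pow_left₀ (gammaWeight_pos hr1 (by omega)).le (gammaWeight_succ_le hr1 hn) 2
  have hVn := hV n hn
  rw [Real.norm_of_nonneg (by positivity)]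
  calc gammaWeight r (n + 1) ^ 2 * ((1 - r) ^ 2 / (n : ℝ) ^ 2 * V n)
      = (1 - r) ^ 2 / (n : ℝ) ^ 2 * (gammaWeight r (n + 1) ^ 2 * V n) := by ring
    _ ≤ (1 - r) ^ 2 / (n : ℝ) ^ 2 * (gammaWeight r n ^ 2 * V n) := by gcongr
    _ ≤ (1 - r) ^ 2 / (n : ℝ) ^ 2 * K := by gcongr; exact hVK n hn
    _ = (1 - r) ^ 2 * K / (n : ℝ) ^ 2 := by ring

end gammaWeight



structure IsDelayedElephantIndicators {Ω : Type*} [m0 : MeasurableSpace Ω] (μ : Measure Ω)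
    (𝓕 : Filtration ℕ m0) (r : ℝ) (I N : ℕ → Ω → ℝ) : Prop where
  zero_or_one : ∀ n, 1 ≤ n → ∀ ω, I n ω = 0 ∨ I n ω = 1
  stronglyMeasurable : ∀ n, 1 ≤ n → StronglyMeasurable[𝓕 n] (I n)
  count_eq_sum : ∀ n ω, N n ω = ∑ k ∈ Finset.Icc 1 n, I k ω
  integral_one : ∫ ω, I 1 ω ∂μ = 1 - r
  condExp_succ : ∀ n, 1 ≤ n → μ[I (n + 1)|𝓕 n] =ᵐ[μ] fun ω => (1 - r) / n * N n ω

namespace IsDelayedElephantIndicators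

variable {Ω : Type*} [m0 : MeasurableSpace Ω] {μ : Measure Ω} {𝓕 : Filtration ℕ m0} {r : ℝ}
  {I N : ℕ → Ω → ℝ}

lemma count_succ (h : IsDelayedElephantIndicators μ 𝓕 r I N) (n : ℕ) (ω : Ω) :
    N (n + 1) ω = N n ω + I (n + 1) ω := by
  rw [h.count_eq_sum, h.count_eq_sum, Finset.sum_Icc_succ_top (by omega)]

lemma count_one (h : IsDelayedElephantIndicators μ 𝓕 r I N) : N 1 = I 1 :=
  funext fun ω => by simp [h.count_eq_sum]

lemma count_mem_Icc (h : IsDelayedElephantIndicators μ 𝓕 r I N) (n : ℕ) (ω : Ω) :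
    N n ω ∈ Set.Icc 0 (n : ℝ) := by
  induction n with
  | zero => simp [h.count_eq_sum]
  | succ n ih =>
    rw [h.count_succ, Nat.cast_succ]
    rcases h.zero_or_one (n + 1) (by omega) ω with hI | hI <;> rw [hI] <;>
      constructor <;> linarith [ih.1, ih.2]

lemma norm_count_le (h : IsDelayedElephantIndicators μ 𝓕 r I N) (n : ℕ) (ω : Ω) :
    ‖N n ω‖ ≤ n := by
  have := h.count_mem_Icc n ω
  rw [Real.norm_of_nonneg this.1]
  exact this.2

lemma stronglyMeasurable_count (h : IsDelayedElephantIndicators μ 𝓕 r I N) (n : ℕ) :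
    StronglyMeasurable[𝓕 n] (N n) := by
  rw [funext (h.count_eq_sum n)]
  exact Finset.stronglyMeasurable_fun_sum _ fun k hk =>
    (h.stronglyMeasurable k (Finset.mem_Icc.1 hk).1).mono (𝓕.mono (Finset.mem_Icc.1 hk).2)

lemma integrable_count_mul (h : IsDelayedElephantIndicators μ 𝓕 r I N) (n : ℕ) {f : Ω → ℝ}
    (hf : Integrable f μ) : Integrable (fun ω => N n ω * f ω) μ :=
  hf.bdd_mul ((h.stronglyMeasurable_count n).mono (𝓕.le n)).aestronglyMeasurable
    (ae_of_all _ (h.norm_count_le n))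

variable [IsFiniteMeasure μ]

lemma integrable (h : IsDelayedElephantIndicators μ 𝓕 r I N) {n : ℕ} (hn : 1 ≤ n) :
    Integrable (I n) μ :=
  .of_bound ((h.stronglyMeasurable n hn).mono (𝓕.le n)).aestronglyMeasurable 1
    (ae_of_all _ fun ω => by rcases h.zero_or_one n hn ω with hI | hI <;> simp [hI])

lemma integrable_count (h : IsDelayedElephantIndicators μ 𝓕 r I N) (n : ℕ) :
    Integrable (N n) μ :=
  .of_bound ((h.stronglyMeasurable_count n).mono (𝓕.le n)).aestronglyMeasurable n
    (ae_of_all _ (h.norm_count_le n))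

lemma integral_count_succ (h : IsDelayedElephantIndicators μ 𝓕 r I N) {n : ℕ} (hn : 1 ≤ n) :
    ∫ ω, N (n + 1) ω ∂μ = (1 + (1 - r) / n) * ∫ ω, N n ω ∂μ := by
  have hI : ∫ ω, I (n + 1) ω ∂μ = (1 - r) / n * ∫ ω, N n ω ∂μ := by
    rw [← integral_condExp (𝓕.le n), integral_congr_ae (h.condExp_succ n hn), integral_const_mul]
  simp_rw [h.count_succ]
  rw [integral_add (h.integrable_count n) (h.integrable (by omega)), hI]
  ring

lemma integral_count_mul_count_add_one_succ (h : IsDelayedElephantIndicators μ 𝓕 r I N) {n : ℕ}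
    (hn : 1 ≤ n) :
    ∫ ω, N (n + 1) ω * (N (n + 1) ω + 1) ∂μ
      = (1 + 2 * (1 - r) / n) * ∫ ω, N n ω * (N n ω + 1) ∂μ := by
  have hX : StronglyMeasurable[𝓕 n] fun ω => 2 * (N n ω + 1) :=
    ((h.stronglyMeasurable_count n).add stronglyMeasurable_const).const_mul 2
  have hXC : ∀ ω, ‖2 * (N n ω + 1)‖ ≤ 2 * (n + 1) := fun ω => by
    rw [norm_mul, Real.norm_ofNat]
    exact mul_le_mul_of_nonneg_left ((norm_add_le _ _).trans (by simpa using h.norm_count_le n ω))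
      zero_le_two
  have hint : Integrable (fun ω => N n ω * (N n ω + 1)) μ :=
    h.integrable_count_mul n ((h.integrable_count n).add (integrable_const 1))
  have hsplit : ∀ ω, N (n + 1) ω * (N (n + 1) ω + 1)
      = N n ω * (N n ω + 1) + 2 * (N n ω + 1) * I (n + 1) ω := fun ω => by
    rcases h.zero_or_one (n + 1) (by omega) ω with hI | hI <;> rw [h.count_succ, hI] <;> ring
  have hXI : Integrable (fun ω => 2 * (N n ω + 1) * I (n + 1) ω) μ :=
    (h.integrable (by omega)).bdd_mul (hX.mono (𝓕.le n)).aestronglyMeasurable (ae_of_all _ hXC)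
  have hcross : ∫ ω, 2 * (N n ω + 1) * I (n + 1) ω ∂μ
      = 2 * (1 - r) / n * ∫ ω, N n ω * (N n ω + 1) ∂μ := by
    rw [integral_mul_eq_of_condExp_eq (𝓕.le n) hX hXC (h.integrable (by omega))
      (h.condExp_succ n hn), ← integral_const_mul]
    congr 1 with ω
    ring
  simp_rw [hsplit]
  rw [integral_add hint hXI, hcross]
  ring

lemma gammaWeight_mul_integral_count (h : IsDelayedElephantIndicators μ 𝓕 r I N) (hr : r < 1)
    {n : ℕ} (hn : 1 ≤ n) : gammaWeight r n * ∫ ω, N n ω ∂μ = 1 - r := by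
  induction n, hn using Nat.le_induction with
  | base => rw [gammaWeight_one hr, one_mul, h.count_one, h.integral_one]
  | succ n hn ih =>
    rw [h.integral_count_succ hn, ← mul_assoc, gammaWeight_succ_mul hr hn, ih]

lemma gammaWeight_sq_mul_integral_count_mul_count_add_one_le
    (h : IsDelayedElephantIndicators μ 𝓕 r I N) (hr : r < 1) {n : ℕ} (hn : 1 ≤ n) :
    gammaWeight r n ^ 2 * ∫ ω, N n ω * (N n ω + 1) ∂μ ≤ 2 * (1 - r) := by
  induction n, hn using Nat.le_induction with
  | base =>
    have hI : ∀ ω, I 1 ω * (I 1 ω + 1) = 2 * I 1 ω := fun ω => by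
      rcases h.zero_or_one 1 le_rfl ω with hI | hI <;> rw [hI] <;> ring
    simp_rw [gammaWeight_one hr, one_pow, one_mul, h.count_one, hI, integral_const_mul,
      h.integral_one, le_refl]
  | succ n hn ih =>
    have hp : 0 ≤ (1 - r) / n := div_nonneg (by linarith) n.cast_nonneg
    have hW : 0 ≤ ∫ ω, N n ω * (N n ω + 1) ∂μ := integral_nonneg fun ω =>
      mul_nonneg (h.count_mem_Icc n ω).1 (by linarith [(h.count_mem_Icc n ω).1])
    calc gammaWeight r (n + 1) ^ 2 * ∫ ω, N (n + 1) ω * (N (n + 1) ω + 1) ∂μ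
        = gammaWeight r (n + 1) ^ 2 * (1 + 2 * ((1 - r) / n))
            * ∫ ω, N n ω * (N n ω + 1) ∂μ := by
          rw [h.integral_count_mul_count_add_one_succ hn]; ring
      _ ≤ (gammaWeight r (n + 1) * (1 + (1 - r) / n)) ^ 2 * ∫ ω, N n ω * (N n ω + 1) ∂μ := by
          gcongr
          nlinarith [sq_nonneg ((1 - r) / n), sq_nonneg (gammaWeight r (n + 1))]
      _ ≤ 2 * (1 - r) := by rwa [gammaWeight_succ_mul hr hn]

lemma gammaWeight_sq_mul_integral_count_sq_le (h : IsDelayedElephantIndicators μ 𝓕 r I N)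
    (hr : r < 1) {n : ℕ} (hn : 1 ≤ n) :
    gammaWeight r n ^ 2 * ∫ ω, N n ω ^ 2 ∂μ ≤ 2 * (1 - r) := by
  refine le_trans (mul_le_mul_of_nonneg_left ?_ (sq_nonneg _))
    (h.gammaWeight_sq_mul_integral_count_mul_count_add_one_le hr hn)
  refine integral_mono (by simpa only [sq] using h.integrable_count_mul n (h.integrable_count n))
    (h.integrable_count_mul n ((h.integrable_count n).add (integrable_const 1))) fun ω => ?_
  nlinarith [(h.count_mem_Icc n ω).1]

lemma condExp_sq_innovation (h : IsDelayedElephantIndicators μ 𝓕 r I N) {n : ℕ} (hn : 1 ≤ n)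
    (c : ℝ) :
    μ[fun ω => (c * (I (n + 1) ω - (1 - r) / n * N n ω)) ^ 2|𝓕 n] =ᵐ[μ]
      fun ω => c ^ 2 * ((1 - r) / n * N n ω - (1 - r) ^ 2 / (n : ℝ) ^ 2 * N n ω ^ 2) := by
  have hvar := condExp_sq_sub_of_zero_or_one (𝓕.le n) (h.zero_or_one (n + 1) (by omega))
    (h.integrable (by omega)) ((h.stronglyMeasurable_count n).const_mul ((1 - r) / n))
    (fun ω => by
      rw [norm_mul]
      exact mul_le_mul_of_nonneg_left (h.norm_count_le n ω) (norm_nonneg _))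
    (h.condExp_succ n hn)
  have hsmul : (fun ω => (c * (I (n + 1) ω - (1 - r) / n * N n ω)) ^ 2)
      = c ^ 2 • fun ω => (I (n + 1) ω - (1 - r) / n * N n ω) ^ 2 := by
    ext ω
    simp only [Pi.smul_apply, smul_eq_mul]
    ring
  rw [hsmul]
  filter_upwards [condExp_smul (c ^ 2) (fun ω => (I (n + 1) ω - (1 - r) / n * N n ω) ^ 2) (𝓕 n),
    hvar] with ω hω hvarω
  rw [hω, Pi.smul_apply, hvarω, smul_eq_mul]
  ring

lemma integral_sq_innovation (h : IsDelayedElephantIndicators μ 𝓕 r I N) {n : ℕ} (hn : 1 ≤ n)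
    (c : ℝ) :
    ∫ ω, (c * (I (n + 1) ω - (1 - r) / n * N n ω)) ^ 2 ∂μ
      = c ^ 2 * ((1 - r) / n * ∫ ω, N n ω ∂μ - (1 - r) ^ 2 / (n : ℝ) ^ 2 * ∫ ω, N n ω ^ 2 ∂μ) := by
  have hsq : Integrable (fun ω => N n ω ^ 2) μ := by
    simpa only [sq] using h.integrable_count_mul n (h.integrable_count n)
  rw [← integral_condExp (𝓕.le n), integral_congr_ae (h.condExp_sq_innovation hn c),
    integral_const_mul, integral_sub ((h.integrable_count n).const_mul _) (hsq.const_mul _),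
    integral_const_mul, integral_const_mul]

lemma isEquivalent_integral_sq_innovation (h : IsDelayedElephantIndicators μ 𝓕 r I N)
    (hr0 : 0 < r) (hr1 : r < 1) :
    (fun n : ℕ => ∫ ω, (gammaWeight r (n + 1) * (I (n + 1) ω - (1 - r) / n * N n ω)) ^ 2 ∂μ)
      ~[atTop] fun n : ℕ => (1 - r) ^ 3 * Real.Gamma (1 - r) * (n : ℝ) ^ (r - 2) := by
  have herr := isLittleO_gammaWeight_sq_mul hr0 hr1 (V := fun n => ∫ ω, N n ω ^ 2 ∂μ)
    (fun n _ => integral_nonneg fun ω => sq_nonneg _)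
    (fun n hn => h.gammaWeight_sq_mul_integral_count_sq_le hr1 hn)
  have hc : (1 - r) ^ 3 * Real.Gamma (1 - r) ≠ 0 :=
    (mul_pos (pow_pos (by linarith) 3) (Real.Gamma_pos_of_pos (by linarith))).ne'
  refine ((isEquivalent_gammaWeight_sq_div hr1).sub_isLittleO
    (herr.const_mul_right hc)).congr_left ?_
  filter_upwards [eventually_ge_atTop 1] with n hn
  have hmean := h.gammaWeight_mul_integral_count hr1 hn
  have hn' : (n : ℝ) ≠ 0 := by positivity
  have := (gammaWeight_pos hr1 hn).ne'
  rw [Pi.sub_apply, h.integral_sq_innovation hn, ← hmean]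
  field_simp

end IsDelayedElephantIndicators

theorem martingale_difference_brackets_general
    {Ω : Type*} [m0 : MeasurableSpace Ω] (μ : Measure Ω) [IsProbabilityMeasure μ]
    (𝓕 : Filtration ℕ m0) (r : ℝ) (hr0 : 0 < r) (hr1 : r < 1)
    (Istar : ℕ → Ω → ℝ)
    (h01 : ∀ n : ℕ, 1 ≤ n → ∀ ω, Istar n ω = 0 ∨ Istar n ω = 1)
    (hadapt : ∀ n : ℕ, 1 ≤ n → StronglyMeasurable[𝓕 n] (Istar n))
    (Nstar : ℕ → Ω → ℝ)
    (hN : ∀ n ω, Nstar n ω = ∑ k ∈ Finset.Icc 1 n, Istar k ω)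
    (hI1 : ∫ ω, Istar 1 ω ∂μ = 1 - r)
    (hcond : ∀ n : ℕ, 1 ≤ n →
      (μ[Istar (n + 1)|𝓕 n]) =ᵐ[μ] fun ω => ((1 - r) / (n : ℝ)) * Nstar n ω)
    (astar : ℕ → ℝ)
    (hastar : ∀ k : ℕ, astar k
      = Real.Gamma (k : ℝ) * Real.Gamma (2 - r) / Real.Gamma ((k : ℝ) + 1 - r))
    (Mstar : ℕ → Ω → ℝ) (hMstar : ∀ n ω, Mstar n ω = astar n * Nstar n ω)
    (eps : ℕ → Ω → ℝ)
    (heps1 : ∀ ω, eps 1 ω = Mstar 1 ω - (1 - r))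
    (heps : ∀ n : ℕ, 2 ≤ n → ∀ ω, eps n ω = Mstar n ω - Mstar (n - 1) ω) :
    (∀ n : ℕ, 1 ≤ n →
      (μ[fun ω => (eps (n + 1) ω) ^ 2|𝓕 n]) =ᵐ[μ]
        fun ω => (astar (n + 1)) ^ 2
          * (((1 - r) / (n : ℝ)) * Nstar n ω
              - ((1 - r) ^ 2 / (n : ℝ) ^ 2) * (Nstar n ω) ^ 2)) ∧
    ((fun n : ℕ => ∫ ω, (eps (n + 1) ω) ^ 2 ∂μ)
      ~[atTop] fun n : ℕ => (1 - r) ^ 3 * Real.Gamma (1 - r) * (n : ℝ) ^ (r - 2)) ∧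
    (∃ C : ℝ, ∀ n : ℕ, 1 ≤ n →
      (∫ ω, ((eps 1 ω) ^ 2
          + ∑ k ∈ Finset.Icc 2 n, (μ[fun ω' => (eps k ω') ^ 2|𝓕 (k - 1)]) ω) ∂μ) ≤ C) := by
  obtain rfl : astar = gammaWeight r := funext hastar
  have hX : IsDelayedElephantIndicators μ 𝓕 r Istar Nstar := ⟨h01, hadapt, hN, hI1, hcond⟩
  have heps_succ : ∀ n, 1 ≤ n → eps (n + 1) = fun ω =>
      gammaWeight r (n + 1) * (Istar (n + 1) ω - (1 - r) / n * Nstar n ω) := fun n hn => by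
    ext ω
    rw [heps (n + 1) (by omega), Nat.add_sub_cancel, hMstar, hMstar, hX.count_succ,
      ← gammaWeight_succ_mul hr1 hn]
    ring
  have hmoment : (fun n : ℕ => ∫ ω, eps (n + 1) ω ^ 2 ∂μ)
      ~[atTop] fun n : ℕ => (1 - r) ^ 3 * Real.Gamma (1 - r) * (n : ℝ) ^ (r - 2) :=
    (hX.isEquivalent_integral_sq_innovation hr0 hr1).congr_left <| by
      filter_upwards [eventually_ge_atTop 1] with n hn
      rw [heps_succ n hn]
  refine ⟨fun n hn => heps_succ n hn ▸ hX.condExp_sq_innovation hn _, hmoment, ?_⟩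
  have hsum : Summable fun k => ∫ ω, eps k ω ^ 2 ∂μ :=
    (summable_nat_add_iff 1).1 <| summable_of_isBigO_nat
      ((Real.summable_nat_rpow.2 (by linarith)).mul_left _) hmoment.isBigO
  have heps1_sq : (fun ω => eps 1 ω ^ 2) = fun ω => (2 * r - 1) * Istar 1 ω + (1 - r) ^ 2 := by
    ext ω
    rw [heps1, hMstar, gammaWeight_one hr1, one_mul, hX.count_one]
    rcases h01 1 le_rfl ω with h | h <;> rw [h] <;> ring
  have heps1_int : Integrable (fun ω => eps 1 ω ^ 2) μ :=
    heps1_sq ▸ ((hX.integrable le_rfl).const_mul _).add (integrable_const _)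
  obtain ⟨C, hC⟩ := exists_integral_add_sum_condExp_le 𝓕 (fun k ω => sq_nonneg (eps k ω))
    heps1_int hsum
  exact ⟨C, fun n _ => hC n⟩

/-- For the ERW with delays and full memory: with `M*_n = α*_n N*_n`,
`α*_k = Γ(k)Γ(2-r)/Γ(k+1-r)`, and martingale differences `ε*_{n+1} = M*_{n+1} - M*_n`
(with `ε*_1 = M*_1 - (1-r)`), one has
`E[(ε*_{n+1})² ∣ 𝓕_n] = (α*_{n+1})² (((1-r)/n) N*_n - ((1-r)²/n²) (N*_n)²)` a.s.,
`E[(ε*_{n+1})²] ∼ (1-r)³ Γ(1-r) n^{r-2}`, and the expected predictable quadratic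
variation `E⟨M*⟩_n` stays bounded. -/
theorem martingale_difference_brackets
    {Ω : Type*} [m0 : MeasurableSpace Ω] (μ : Measure Ω) [IsProbabilityMeasure μ]
    (𝓕 : Filtration ℕ m0) (r : ℝ) (hr0 : 0 < r) (hr1 : r < 1)
    (Istar : ℕ → Ω → ℝ)
    (h01 : ∀ n : ℕ, 1 ≤ n → ∀ ω, Istar n ω = 0 ∨ Istar n ω = 1)
    (hadapt : ∀ n : ℕ, 1 ≤ n → StronglyMeasurable[𝓕 n] (Istar n))
    (hint : ∀ n : ℕ, 1 ≤ n → Integrable (Istar n) μ)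
    (Nstar : ℕ → Ω → ℝ)
    (hN : ∀ n ω, Nstar n ω = ∑ k ∈ Finset.Icc 1 n, Istar k ω)
    (hI1 : ∫ ω, Istar 1 ω ∂μ = 1 - r)
    (hcond : ∀ n : ℕ, 1 ≤ n →
      (μ[Istar (n + 1)|𝓕 n]) =ᵐ[μ] fun ω => ((1 - r) / (n : ℝ)) * Nstar n ω)
    (astar : ℕ → ℝ)
    (hastar : ∀ k : ℕ, astar k
      = Real.Gamma (k : ℝ) * Real.Gamma (2 - r) / Real.Gamma ((k : ℝ) + 1 - r))
    (Mstar : ℕ → Ω → ℝ) (hMstar : ∀ n ω, Mstar n ω = astar n * Nstar n ω)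
    (eps : ℕ → Ω → ℝ)
    (heps1 : ∀ ω, eps 1 ω = Mstar 1 ω - (1 - r))
    (heps : ∀ n : ℕ, 2 ≤ n → ∀ ω, eps n ω = Mstar n ω - Mstar (n - 1) ω) :
    (∀ n : ℕ, 1 ≤ n →
      (μ[fun ω => (eps (n + 1) ω) ^ 2|𝓕 n]) =ᵐ[μ]
        fun ω => (astar (n + 1)) ^ 2
          * (((1 - r) / (n : ℝ)) * Nstar n ω
              - ((1 - r) ^ 2 / (n : ℝ) ^ 2) * (Nstar n ω) ^ 2)) ∧
    ((fun n : ℕ => ∫ ω, (eps (n + 1) ω) ^ 2 ∂μ)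
      ~[atTop] fun n : ℕ => (1 - r) ^ 3 * Real.Gamma (1 - r) * (n : ℝ) ^ (r - 2)) ∧
    (∃ C : ℝ, ∀ n : ℕ, 1 ≤ n →
      (∫ ω, ((eps 1 ω) ^ 2
          + ∑ k ∈ Finset.Icc 2 n, (μ[fun ω' => (eps k ω') ^ 2|𝓕 (k - 1)]) ω) ∂μ) ≤ C) :=
  martingale_difference_brackets_general (m0 := m0) μ 𝓕 r hr0 hr1 Istar h01 hadapt Nstar hN hI1
    hcond astar hastar Mstar hMstar eps heps1 heps
end

section
/- As n → ∞, E[N*_n/n^{1-r}] = E[(n - N_n)/n^{1-r}] → 1/Γ(1-r). -/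
open MeasureTheory Filter Finset Nat Topology

/-!
Taking expectations in `E[I*_{n+1} | F_n] = (1-r)/n · N*_n` gives the recursion
`E[N*_{n+1}] = (n + 1 - r)/n · E[N*_n]` with `E[N*_1] = 1 - r`, hence with `s = 1 - r`
`E[N*_n] = n · s (s+1) ⋯ (s+n-1) / n!`. Thus `E[N*_n] / n^s = n / (n + s) / GammaSeq s n`,
and Euler's limit `GammaSeq s n → Γ(s)` finishes the proof.
-/

noncomputable def expectedCount (s : ℝ) (n : ℕ) : ℝ :=
  n * (∏ j ∈ range n, (s + j)) / n !

theorem expectedCount_one (s : ℝ) : expectedCount s 1 = s := by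
  simp [expectedCount]

theorem expectedCount_succ (s : ℝ) {n : ℕ} (hn : n ≠ 0) :
    expectedCount s (n + 1) = (1 + s / n) * expectedCount s n := by
  have hn' : (n : ℝ) ≠ 0 := Nat.cast_ne_zero.mpr hn
  simp only [expectedCount, prod_range_succ, factorial_succ]
  push_cast
  field_simp
  ring

theorem expectedCount_div_rpow_eq (s : ℝ) {n : ℕ} (hn : n ≠ 0) (hs : ∀ m : ℕ, s ≠ -m) :
    expectedCount s n / (n : ℝ) ^ s = n / (n + s) / Real.GammaSeq s n := by
  have hn' : (0 : ℝ) < n := by positivity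
  have hsj : ∀ j : ℕ, s + j ≠ 0 := fun j h => hs j (by linarith)
  have hprod : ∏ j ∈ range n, (s + j) ≠ 0 := prod_ne_zero_iff.mpr fun j _ => hsj j
  have hsn : (n : ℝ) + s ≠ 0 := by rw [add_comm]; exact hsj n
  have hrpow : (n : ℝ) ^ s ≠ 0 := (Real.rpow_pos_of_pos hn' s).ne'
  simp only [expectedCount, Real.GammaSeq, prod_range_succ]
  field_simp
  ring

theorem tendsto_expectedCount_div_rpow {s : ℝ} (hs : ∀ m : ℕ, s ≠ -m) :
    Tendsto (fun n : ℕ => expectedCount s n / (n : ℝ) ^ s) atTop (𝓝 (1 / Real.Gamma s)) := by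
  have hlim := (tendsto_natCast_div_add_atTop s).div (Real.GammaSeq_tendsto_Gamma s)
    (Real.Gamma_ne_zero hs)
  refine hlim.congr' ?_
  filter_upwards [eventually_ne_atTop 0] with n hn
  exact (expectedCount_div_rpow_eq s hn hs).symm

section Expectation

variable {Ω : Type*} [m0 : MeasurableSpace Ω] {μ : Measure Ω}

theorem integral_eq_const_mul_of_condExp_ae_eq {m : MeasurableSpace Ω} (hm : m ≤ m0)
    [SigmaFinite (μ.trim hm)] {X Y : Ω → ℝ} {c : ℝ} (h : μ[X|m] =ᵐ[μ] fun ω => c * Y ω) :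
    ∫ ω, X ω ∂μ = c * ∫ ω, Y ω ∂μ := by
  rw [← integral_condExp hm, integral_congr_ae h, integral_const_mul]

variable {I N : ℕ → Ω → ℝ}

theorem integrable_sum_Icc (hint : ∀ k, 1 ≤ k → Integrable (I k) μ)
    (hN : ∀ n ω, N n ω = ∑ k ∈ Icc 1 n, I k ω) (n : ℕ) : Integrable (N n) μ := by
  simp_rw [funext (hN n)]
  exact integrable_finsetSum _ fun k hk => hint k (mem_Icc.mp hk).1

theorem integral_sum_Icc_succ [IsFiniteMeasure μ] (𝓕 : Filtration ℕ m0) {s : ℝ} {n : ℕ}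
    (hint : ∀ k, 1 ≤ k → Integrable (I k) μ) (hN : ∀ n ω, N n ω = ∑ k ∈ Icc 1 n, I k ω)
    (hcond : μ[I (n + 1)|𝓕 n] =ᵐ[μ] fun ω => (s / n) * N n ω) :
    ∫ ω, N (n + 1) ω ∂μ = (1 + s / n) * ∫ ω, N n ω ∂μ := by
  have hsucc : N (n + 1) = fun ω => N n ω + I (n + 1) ω := by
    ext ω
    rw [hN, hN, sum_Icc_succ_top (by omega)]
  rw [hsucc, integral_add (integrable_sum_Icc hint hN n) (hint _ (by omega)),
    integral_eq_const_mul_of_condExp_ae_eq (𝓕.le n) hcond]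
  ring

end Expectation

theorem expected_normalized_count_limit_general
    {Ω : Type*} [m0 : MeasurableSpace Ω] (μ : Measure Ω) [IsProbabilityMeasure μ]
    (𝓕 : Filtration ℕ m0) (r : ℝ) (hr1 : r < 1)
    (Istar : ℕ → Ω → ℝ)
    (hint : ∀ n : ℕ, 1 ≤ n → Integrable (Istar n) μ)
    (Nstar : ℕ → Ω → ℝ)
    (hN : ∀ n ω, Nstar n ω = ∑ k ∈ Finset.Icc 1 n, Istar k ω)
    (hI1 : ∫ ω, Istar 1 ω ∂μ = 1 - r)
    (hcond : ∀ n : ℕ, 1 ≤ n →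
      (μ[Istar (n + 1)|𝓕 n]) =ᵐ[μ] fun ω => ((1 - r) / (n : ℝ)) * Nstar n ω)
    (N : ℕ → Ω → ℝ) (hNdef : ∀ n ω, N n ω = (n : ℝ) - Nstar n ω) :
    Tendsto (fun n : ℕ => ∫ ω, Nstar n ω / (n : ℝ) ^ (1 - r) ∂μ) atTop
      (nhds (1 / Real.Gamma (1 - r))) ∧
    Tendsto (fun n : ℕ => ∫ ω, ((n : ℝ) - N n ω) / (n : ℝ) ^ (1 - r) ∂μ) atTop
      (nhds (1 / Real.Gamma (1 - r))) := by
  have hmean : ∀ n, 1 ≤ n → ∫ ω, Nstar n ω ∂μ = expectedCount (1 - r) n := by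
    refine Nat.le_induction ?_ fun n hn ih => ?_
    · simp_rw [hN, Icc_self, sum_singleton, hI1, expectedCount_one]
    · rw [integral_sum_Icc_succ 𝓕 hint hN (hcond n hn), ih, expectedCount_succ _ (by omega)]
  have hs : ∀ m : ℕ, 1 - r ≠ -m := fun m h => by linarith [m.cast_nonneg (α := ℝ)]
  have hNstar : Tendsto (fun n : ℕ => ∫ ω, Nstar n ω / (n : ℝ) ^ (1 - r) ∂μ) atTop
      (𝓝 (1 / Real.Gamma (1 - r))) := by
    refine (tendsto_expectedCount_div_rpow hs).congr' ?_
    filter_upwards [eventually_ge_atTop 1] with n hn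
    rw [integral_div, hmean n hn]
  refine ⟨hNstar, hNstar.congr fun n => ?_⟩
  simp_rw [hNdef, sub_sub_cancel]

/-- Last assertion of Theorem 3.1: for the ERW with delays and full memory,
`E[N*_n / n^{1-r}] = E[(n - N_n)/n^{1-r}] → 1/Γ(1-r)` as `n → ∞`. -/
theorem expected_normalized_count_limit
    {Ω : Type*} [m0 : MeasurableSpace Ω] (μ : Measure Ω) [IsProbabilityMeasure μ]
    (𝓕 : Filtration ℕ m0) (r : ℝ) (hr0 : 0 < r) (hr1 : r < 1)
    (Istar : ℕ → Ω → ℝ)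
    (h01 : ∀ n : ℕ, 1 ≤ n → ∀ ω, Istar n ω = 0 ∨ Istar n ω = 1)
    (hadapt : ∀ n : ℕ, 1 ≤ n → StronglyMeasurable[𝓕 n] (Istar n))
    (hint : ∀ n : ℕ, 1 ≤ n → Integrable (Istar n) μ)
    (Nstar : ℕ → Ω → ℝ)
    (hN : ∀ n ω, Nstar n ω = ∑ k ∈ Finset.Icc 1 n, Istar k ω)
    (hI1 : ∫ ω, Istar 1 ω ∂μ = 1 - r)
    (hcond : ∀ n : ℕ, 1 ≤ n →
      (μ[Istar (n + 1)|𝓕 n]) =ᵐ[μ] fun ω => ((1 - r) / (n : ℝ)) * Nstar n ω)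
    (N : ℕ → Ω → ℝ) (hNdef : ∀ n ω, N n ω = (n : ℝ) - Nstar n ω) :
    Tendsto (fun n : ℕ => ∫ ω, Nstar n ω / (n : ℝ) ^ (1 - r) ∂μ) atTop
      (nhds (1 / Real.Gamma (1 - r))) ∧
    Tendsto (fun n : ℕ => ∫ ω, ((n : ℝ) - N n ω) / (n : ℝ) ^ (1 - r) ∂μ) atTop
      (nhds (1 / Real.Gamma (1 - r))) :=
  expected_normalized_count_limit_general (m0 := m0) μ 𝓕 r hr1 Istar hint Nstar hN hI1 hcond N hNdef
end
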